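/- arXiv:2602.08260 — 8 statements merged into one kernel-verified Lean document; each statement's English description precedes it below -/
import Mathlib

section
/- Let S be a real N×N symmetric positive definite matrix. Then Tr(S⁻¹) ≥ ∑_{n=1}^N 1/[S]_{n,n}, and equality holds if and only if S is diagonal. -/
/-!
With `eₙ` the `n`-th standard basis vector and `w = S⁻¹ eₙ - eₙ / Sₙₙ`, a direct expansion gives
`wᵀ S w = (S⁻¹)ₙₙ - 1 / Sₙₙ`. Positive definiteness makes this nonnegative, and zero exactly when
`w = 0`, i.e. when `S eₙ = Sₙₙ eₙ`: the `n`-th column of `S` vanishes off the diagonal.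
Summing over `n` gives both the inequality and its equality case.
-/

open Matrix BigOperators

namespace Matrix

variable {ι : Type*} [Fintype ι] {S : Matrix ι ι ℝ}

theorem IsHermitian.dotProduct_mulVec_comm (hS : S.IsHermitian) (x y : ι → ℝ) :
    x ⬝ᵥ (S *ᵥ y) = (S *ᵥ x) ⬝ᵥ y := by
  rw [dotProduct_mulVec, ← mulVec_transpose, ← conjTranspose_eq_transpose_of_trivial, hS]

theorem PosDef.dotProduct_mulVec_eq_zero_iff (hS : S.PosDef) {x : ι → ℝ} :
    x ⬝ᵥ (S *ᵥ x) = 0 ↔ x = 0 := by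
  refine ⟨fun h => ?_, fun h => by rw [h, zero_dotProduct]⟩
  by_contra hx
  simpa [h] using hS.dotProduct_mulVec_pos hx

variable [DecidableEq ι]

theorem inv_mulVec_eq_iff {α : Type*} [CommRing α] {A : Matrix ι ι α} (hA : IsUnit A.det)
    {u v : ι → α} : A⁻¹ *ᵥ u = v ↔ u = A *ᵥ v := by
  constructor
  · rintro rfl
    rw [mulVec_mulVec, mul_nonsing_inv A hA, one_mulVec]
  · rintro rfl
    rw [mulVec_mulVec, nonsing_inv_mul A hA, one_mulVec]

theorem IsHermitian.dotProduct_mulVec_inv_sub_smul (hS : S.IsHermitian) (hdet : IsUnit S.det)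
    (x : ι → ℝ) (t : ℝ) :
    (S⁻¹ *ᵥ x - t • x) ⬝ᵥ (S *ᵥ (S⁻¹ *ᵥ x - t • x)) =
      x ⬝ᵥ (S⁻¹ *ᵥ x) - 2 * t * (x ⬝ᵥ x) + t ^ 2 * (x ⬝ᵥ (S *ᵥ x)) := by
  have hx : S *ᵥ (S⁻¹ *ᵥ x) = x := by rw [mulVec_mulVec, mul_nonsing_inv S hdet, one_mulVec]
  have hcross : S⁻¹ *ᵥ x ⬝ᵥ (S *ᵥ x) = x ⬝ᵥ x := by
    rw [hS.dotProduct_mulVec_comm, hx]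
  rw [mulVec_sub, mulVec_smul, hx, sub_dotProduct, dotProduct_sub, dotProduct_sub,
    dotProduct_smul, dotProduct_smul, smul_dotProduct, smul_dotProduct, hcross,
    dotProduct_comm (S⁻¹ *ᵥ x) x]
  simp only [smul_eq_mul]
  ring

theorem PosDef.dotProduct_mulVec_inv_single_sub_smul_single (hS : S.PosDef) (n : ι) :
    (S⁻¹ *ᵥ Pi.single n 1 - (S n n)⁻¹ • Pi.single n 1) ⬝ᵥ
        (S *ᵥ (S⁻¹ *ᵥ Pi.single n 1 - (S n n)⁻¹ • Pi.single n 1)) =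
      S⁻¹ n n - (S n n)⁻¹ := by
  rw [hS.isHermitian.dotProduct_mulVec_inv_sub_smul hS.det_pos.ne'.isUnit]
  simp only [mulVec_single_one, single_dotProduct, one_mul, col_apply, dotProduct_single,
    mul_one, Pi.single_eq_same]
  field_simp [hS.diag_pos.ne']
  ring

theorem PosDef.inv_apply_self_le_inv_apply_self (hS : S.PosDef) (n : ι) :
    (S n n)⁻¹ ≤ S⁻¹ n n := by
  have := hS.posSemidef.dotProduct_mulVec_nonneg
    (S⁻¹ *ᵥ Pi.single n 1 - (S n n)⁻¹ • Pi.single n 1)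
  rw [star_trivial, hS.dotProduct_mulVec_inv_single_sub_smul_single] at this
  linarith

theorem PosDef.inv_apply_self_eq_inv_iff (hS : S.PosDef) (n : ι) :
    S⁻¹ n n = (S n n)⁻¹ ↔ ∀ i, i ≠ n → S i n = 0 := by
  have hSnn : S n n ≠ 0 := hS.diag_pos.ne'
  rw [← sub_eq_zero, ← hS.dotProduct_mulVec_inv_single_sub_smul_single,
    hS.dotProduct_mulVec_eq_zero_iff, sub_eq_zero, inv_mulVec_eq_iff hS.det_pos.ne'.isUnit,
    mulVec_smul, mulVec_single_one, funext_iff]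
  refine forall_congr' fun i => ?_
  rcases eq_or_ne i n with rfl | hin
  · simp [hSnn]
  · simp [hin, hSnn, eq_comm (a := (0 : ℝ))]

end Matrix

/-- For a real symmetric positive definite matrix S,
Tr(S⁻¹) ≥ ∑ₙ 1/[S]ₙₙ, with equality iff S is diagonal. -/
theorem stmt_1 {N : ℕ} (S : Matrix (Fin N) (Fin N) ℝ) (hS : S.PosDef) :
    Matrix.trace S⁻¹ ≥ ∑ n, 1 / S n n ∧
      (Matrix.trace S⁻¹ = ∑ n, 1 / S n n ↔ ∀ i j, i ≠ j → S i j = 0) := by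
  simp only [one_div, trace, diag_apply, ge_iff_le]
  have hle : ∀ n ∈ Finset.univ, (S n n)⁻¹ ≤ S⁻¹ n n :=
    fun n _ => hS.inv_apply_self_le_inv_apply_self n
  refine ⟨Finset.sum_le_sum hle, ?_⟩
  rw [eq_comm, Finset.sum_eq_sum_iff_of_le hle, forall_comm]
  simp only [Finset.mem_univ, true_implies, eq_comm (a := (S _ _)⁻¹), hS.inv_apply_self_eq_inv_iff]
end

section
/- Let Σ_xx = diag(σ_{x,1}², …, σ_{x,N}²) and Σ_ww = diag(σ_{w,1}², …, σ_{w,M}²) be diagonal matrices with positive diagonal entries, M ≤ N. Let P̃ ∈ {0,1}^{M×N} be a partial permutation matrix, let T ⊆ {1,…,N} be the set of selected column indices (those k such that P̃_{m,k} = 1 for some m, so |T| = M), and let φ : T → {1,…,M} be defined by P̃_{φ(k),k} = 1. Then Tr((Σ_xx⁻¹ + P̃ᵀ Σ_ww⁻¹ P̃)⁻¹) = ∑_{k∈T} σ_{x,k}² σ_{w,φ(k)}² / (σ_{x,k}² + σ_{w,φ(k)}²) + ∑_{t∈{1,…,N}∖T} σ_{x,t}². -/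
open Matrix BigOperators

lemma diag_inv_aux {n : ℕ} (v : Fin n → ℝ) (hv : ∀ k, v k ≠ 0) :
    (Matrix.diagonal v)⁻¹ = Matrix.diagonal (fun k => (v k)⁻¹) := by
  apply Matrix.inv_eq_right_inv
  rw [Matrix.diagonal_mul_diagonal]
  have : (fun k => v k * (v k)⁻¹) = fun _ => (1 : ℝ) :=
    funext fun k => mul_inv_cancel₀ (hv k)
  rw [this, Matrix.diagonal_one]

/-- Value of Tr((Σ_xx⁻¹ + P̃ᵀ Σ_ww⁻¹ P̃)⁻¹) for a partial permutation
matrix P̃ with selected index set T and index mapping φ. -/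
theorem stmt_7 {N M : ℕ} (hMN : M ≤ N)
    (σx : Fin N → ℝ) (hσx : ∀ n, 0 < σx n)
    (σw : Fin M → ℝ) (hσw : ∀ m, 0 < σw m)
    (P : Matrix (Fin M) (Fin N) ℝ)
    (hP01 : ∀ i j, P i j = 0 ∨ P i j = 1)
    (hP : P * Pᵀ = 1)
    (T : Finset (Fin N)) (hT : ∀ k, k ∈ T ↔ ∃ m, P m k = 1)
    (φ : Fin N → Fin M) (hφ : ∀ k ∈ T, P (φ k) k = 1) :
    Matrix.trace (((Matrix.diagonal σx)⁻¹ + Pᵀ * (Matrix.diagonal σw)⁻¹ * P)⁻¹) =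
      (∑ k ∈ T, σx k * σw (φ k) / (σx k + σw (φ k))) + ∑ t ∈ Tᶜ, σx t := by
  have hzero : ∀ m k, P m k ≠ 1 → P m k = 0 := by
    intro m k h; rcases hP01 m k with h0 | h1 <;> tauto
  have hnn : ∀ m k, 0 ≤ P m k := by
    intro m k; rcases hP01 m k with h | h <;> simp [h]
  have huniq : ∀ (i : Fin N) (m m' : Fin M), P m i = 1 → P m' i = 1 → m = m' := by
    intro i m m' h1 h2
    by_contra hne
    have := congrFun (congrFun hP m) m'
    simp [Matrix.mul_apply, Matrix.one_apply, hne] at this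
    have hle : P m i * P m' i ≤ ∑ k, P m k * P m' k :=
      Finset.single_le_sum (f := fun k => P m k * P m' k)
        (fun k _ => mul_nonneg (hnn m k) (hnn m' k)) (Finset.mem_univ i)
    rw [this, h1, h2] at hle
    norm_num at hle
  have hrow : ∀ (m : Fin M) (i j : Fin N), i ≠ j → P m i = 1 → P m j = 1 → False := by
    intro m i j hij h1 h2
    have hdiag := congrFun (congrFun hP m) m
    simp [Matrix.mul_apply, Matrix.one_apply] at hdiag
    have hle : ∑ k ∈ ({i, j} : Finset (Fin N)), P m k * P m k ≤ ∑ k, P m k * P m k :=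
      Finset.sum_le_sum_of_subset_of_nonneg (by simp)
        (fun k _ _ => mul_nonneg (hnn m k) (hnn m k))
    rw [Finset.sum_pair hij, h1, h2, hdiag] at hle
    norm_num at hle
  set d : Fin N → ℝ := fun k => (σx k)⁻¹ + (if k ∈ T then (σw (φ k))⁻¹ else 0) with hd
  have hdpos : ∀ k, 0 < d k := by
    intro k
    have hx := inv_pos.mpr (hσx k)
    by_cases h : k ∈ T
    · have hw := inv_pos.mpr (hσw (φ k)); simp only [hd, if_pos h]; linarith
    · simp only [hd, if_neg h]; linarith
  have hentry : ∀ i j, (Pᵀ * (Matrix.diagonal fun m => (σw m)⁻¹) * P) i j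
      = ∑ m, P m i * (σw m)⁻¹ * P m j := by
    intro i j
    rw [Matrix.mul_apply]
    simp only [Matrix.mul_diagonal, Matrix.transpose_apply]
  have hmat : (Matrix.diagonal σx)⁻¹ + Pᵀ * (Matrix.diagonal σw)⁻¹ * P = Matrix.diagonal d := by
    rw [diag_inv_aux σx (fun k => (hσx k).ne'), diag_inv_aux σw (fun m => (hσw m).ne')]
    ext i j
    rw [Matrix.add_apply, hentry]
    by_cases hij : i = j
    · subst hij
      rw [Matrix.diagonal_apply_eq, Matrix.diagonal_apply_eq]
      have hsum : ∑ m, P m i * (σw m)⁻¹ * P m i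
          = if i ∈ T then (σw (φ i))⁻¹ else 0 := by
        by_cases h : i ∈ T
        · rw [if_pos h]
          rw [Finset.sum_eq_single (φ i)]
          · rw [hφ i h]; ring
          · intro m _ hm
            have : P m i = 0 := by
              apply hzero; intro h1; exact hm (huniq i m (φ i) h1 (hφ i h))
            simp [this]
          · simp
        · rw [if_neg h]
          apply Finset.sum_eq_zero
          intro m _
          have : P m i = 0 := by
            apply hzero; intro h1; exact h ((hT i).mpr ⟨m, h1⟩)
          simp [this]
      rw [hsum, hd]
    · rw [Matrix.diagonal_apply_ne _ hij, Matrix.diagonal_apply_ne _ hij]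
      have hsum : ∑ m, P m i * (σw m)⁻¹ * P m j = 0 := by
        apply Finset.sum_eq_zero
        intro m _
        rcases hP01 m i with h | h
        · simp [h]
        · have : P m j = 0 := by
            apply hzero; intro h2; exact hrow m i j hij h h2
          simp [this]
      rw [hsum]; ring
  rw [hmat, diag_inv_aux d (fun k => (hdpos k).ne'), Matrix.trace_diagonal]
  rw [← Finset.sum_add_sum_compl T (fun k => (d k)⁻¹)]
  congr 1
  · apply Finset.sum_congr rfl
    intro k hk
    have hx := hσx k; have hw := hσw (φ k)
    simp only [hd, if_pos hk]
    field_simp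
    ring
  · apply Finset.sum_congr rfl
    intro k hk
    rw [Finset.mem_compl] at hk
    simp only [hd, if_neg hk, add_zero, inv_inv]
end

section
/- Let A be a nonempty finite index set with |A| = n, let σ_k² > 0 for k ∈ A, and let λ be a real number with 0 < λ < 2σ_k² for all k ∈ A. Define w_k² = λσ_k²/(2σ_k² − λ). If the rate constraint holds with equality, i.e., (1/2) ∑_{k∈A} ln(1 + σ_k²/w_k²) = C, then λ = 2 e^{−2C/n} (∏_{k∈A} σ_k²)^{1/n}. -/
open BigOperators

/-! With `w_k = λσ_k/(2σ_k − λ)` every summand of the rate is `ln(2σ_k/λ)`, so the rate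
constraint reads `2C = n (ln 2 − ln λ) + ln ∏ σ_k`; solving for `ln λ` and exponentiating
gives the closed form. -/

lemma one_add_div_mul_div_sub {K : Type*} [Field K] {s lam : K} (hs : s ≠ 0) (hlam : lam ≠ 0) :
    1 + s / (lam * s / (2 * s - lam)) = 2 * s / lam := by
  field_simp
  ring

lemma sum_log_two_mul_div {ι : Type*} (A : Finset ι) (σ : ι → ℝ) (hσ : ∀ k ∈ A, σ k ≠ 0)
    {lam : ℝ} (hlam : lam ≠ 0) :
    ∑ k ∈ A, Real.log (2 * σ k / lam)
      = A.card * (Real.log 2 - Real.log lam) + Real.log (∏ k ∈ A, σ k) := by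
  rw [Real.log_prod hσ, Finset.sum_congr rfl fun k hk => by
    rw [Real.log_div (mul_ne_zero two_ne_zero (hσ k hk)) hlam,
      Real.log_mul two_ne_zero (hσ k hk)]]
  simp only [Finset.sum_sub_distrib, Finset.sum_add_distrib, Finset.sum_const, nsmul_eq_mul]
  ring

theorem stmt_11_general {ι : Type*} (A : Finset ι) (hA : A.Nonempty)
    (σ : ι → ℝ) (hσ : ∀ k ∈ A, 0 < σ k)
    (lam C : ℝ) (hlam0 : 0 < lam)
    (w : ι → ℝ) (hw : ∀ k ∈ A, w k = lam * σ k / (2 * σ k - lam))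
    (hC : (1 / 2 : ℝ) * ∑ k ∈ A, Real.log (1 + σ k / w k) = C) :
    lam = 2 * Real.exp (-2 * C / (A.card : ℝ)) * (∏ k ∈ A, σ k) ^ (1 / (A.card : ℝ)) := by
  have hn : (0 : ℝ) < A.card := by exact_mod_cast hA.card_pos
  have hprod : 0 < ∏ k ∈ A, σ k := Finset.prod_pos hσ
  have hrate : 2 * C = A.card * (Real.log 2 - Real.log lam) + Real.log (∏ k ∈ A, σ k) := by
    rw [← sum_log_two_mul_div A σ (fun k hk => (hσ k hk).ne') hlam0.ne', ← hC,
      Finset.sum_congr rfl fun k hk => by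
        rw [hw k hk, one_add_div_mul_div_sub (hσ k hk).ne' hlam0.ne']]
    ring
  refine Real.log_injOn_pos hlam0 (by positivity : (0 : ℝ) < _) ?_
  rw [Real.log_mul (by positivity) (Real.rpow_pos_of_pos hprod _).ne',
    Real.log_mul two_ne_zero (Real.exp_pos _).ne', Real.log_exp, Real.log_rpow hprod]
  field_simp
  linarith

/-- Closed form for the Lagrange multiplier: if w_k² = λσ_k²/(2σ_k² − λ)
for all k in the active set A and (1/2)∑_{k∈A} ln(1 + σ_k²/w_k²) = C, then
λ = 2 e^{−2C/n} (∏_{k∈A} σ_k²)^{1/n}, where n = |A|. -/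
theorem stmt_11 {ι : Type*} (A : Finset ι) (hA : A.Nonempty)
    (σ : ι → ℝ) (hσ : ∀ k ∈ A, 0 < σ k)
    (lam C : ℝ) (hlam0 : 0 < lam) (hlam2 : ∀ k ∈ A, lam < 2 * σ k)
    (w : ι → ℝ) (hw : ∀ k ∈ A, w k = lam * σ k / (2 * σ k - lam))
    (hC : (1 / 2 : ℝ) * ∑ k ∈ A, Real.log (1 + σ k / w k) = C) :
    lam = 2 * Real.exp (-2 * C / (A.card : ℝ)) * (∏ k ∈ A, σ k) ^ (1 / (A.card : ℝ)) :=
  stmt_11_general A hA σ hσ lam C hlam0 w hw hC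
end

section
/- Let σ_1², …, σ_N² > 0 and C > 0. For a nonempty subset S ⊆ {1,…,N}, define λ_S = 2 e^{−2C/|S|} (∏_{k∈S} σ_k²)^{1/|S|} and D(S) = (λ_S/2)·|S| − ∑_{k∈S} σ_k². Let A ⊆ {1,…,N} be nonempty, and suppose p ∉ A, q ∈ A, σ_p² > σ_q², and λ_A < 2σ_q². Set B = (A ∖ {q}) ∪ {p}. Then D(B) < D(A). -/
open BigOperators

/-- The Lagrange multiplier λ_S = 2 e^{−2C/|S|} (∏_{k∈S} σ_k²)^{1/|S|} associated with
an active source index set S. -/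
noncomputable def lamS {N : ℕ} (σ : Fin N → ℝ) (C : ℝ) (S : Finset (Fin N)) : ℝ :=
  2 * Real.exp (-2 * C / (S.card : ℝ)) * (∏ k ∈ S, σ k) ^ (1 / (S.card : ℝ))

/-- The (shifted) minimal total distortion D(S) = (λ_S/2)|S| − ∑_{k∈S} σ_k². -/
noncomputable def DS {N : ℕ} (σ : Fin N → ℝ) (C : ℝ) (S : Finset (Fin N)) : ℝ :=
  lamS σ C S / 2 * (S.card : ℝ) - ∑ k ∈ S, σ k

/-- Swapping an active component q for an inactive component p with a
strictly larger variance strictly decreases the distortion: D(B) < D(A) for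
B = (A ∖ {q}) ∪ {p}, provided σ_p² > σ_q² and λ_A < 2σ_q². -/
theorem stmt_12 {N : ℕ} (σ : Fin N → ℝ) (hσ : ∀ n, 0 < σ n) (C : ℝ) (hC : 0 < C)
    (A : Finset (Fin N)) (hA : A.Nonempty) (p q : Fin N)
    (hp : p ∉ A) (hq : q ∈ A) (hpq : σ q < σ p)
    (hactive : lamS σ C A < 2 * σ q) :
    DS σ C (insert p (A.erase q)) < DS σ C A := by
  have hσp := hσ p
  have hσq := hσ q
  have hm1 : 1 ≤ A.card := Finset.card_pos.mpr hA
  have hm0 : (0:ℝ) < (A.card : ℝ) := by exact_mod_cast hm1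
  have hpe : p ∉ A.erase q := fun h => hp (Finset.mem_of_mem_erase h)
  have hcardB : (insert p (A.erase q)).card = A.card := by
    rw [Finset.card_insert_of_notMem hpe, Finset.card_erase_of_mem hq]
    omega
  have hPpos : 0 < ∏ k ∈ A.erase q, σ k := Finset.prod_pos (fun i _ => hσ i)
  have hprodA : ∏ k ∈ A, σ k = σ q * ∏ k ∈ A.erase q, σ k :=
    (Finset.mul_prod_erase A σ hq).symm
  have hprodB : ∏ k ∈ insert p (A.erase q), σ k = σ p * ∏ k ∈ A.erase q, σ k :=
    Finset.prod_insert hpe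
  have hsumB : ∑ k ∈ insert p (A.erase q), σ k = σ p + (∑ k ∈ A, σ k - σ q) := by
    rw [Finset.sum_insert hpe, Finset.sum_erase_eq_sub hq]
  set t : ℝ := (σ p / σ q) ^ (1/(A.card:ℝ)) with ht
  have hr1 : 1 < σ p / σ q := (one_lt_div hσq).mpr hpq
  have ht1 : 1 < t := by
    rw [ht]
    exact (Real.one_lt_rpow_iff_of_pos (by positivity)).mpr (Or.inl ⟨hr1, by positivity⟩)
  have hprodApos : 0 < ∏ k ∈ A, σ k := Finset.prod_pos (fun i _ => hσ i)
  have hlamApos : 0 < lamS σ C A := by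
    unfold lamS
    have := Real.exp_pos (-2 * C / (A.card : ℝ))
    positivity
  have hlam : lamS σ C (insert p (A.erase q)) = lamS σ C A * t := by
    unfold lamS
    rw [hcardB, hprodA, hprodB, ht]
    have hrw : σ p * ∏ k ∈ A.erase q, σ k =
        (σ q * ∏ k ∈ A.erase q, σ k) * (σ p / σ q) := by
      field_simp
    rw [hrw, Real.mul_rpow (by positivity) (by positivity)]
    ring
  have htm : t ^ A.card = σ p / σ q := by
    rw [ht, ← Real.rpow_natCast ((σ p / σ q) ^ (1/(A.card:ℝ))) A.card,
      ← Real.rpow_mul (le_of_lt (div_pos hσp hσq)), one_div,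
      inv_mul_cancel₀ (ne_of_gt hm0), Real.rpow_one]
  have hB : 1 + (A.card : ℝ) * (t - 1) ≤ σ p / σ q := by
    have h := one_add_mul_le_pow (by linarith : (-2:ℝ) ≤ t - 1) A.card
    have h1t : 1 + (t - 1) = t := by ring
    rwa [h1t, htm] at h
  have key : (A.card : ℝ) * σ q * (t - 1) ≤ σ p - σ q := by
    have := mul_le_mul_of_nonneg_right hB (le_of_lt hσq)
    rw [div_mul_cancel₀ _ (ne_of_gt hσq)] at this
    nlinarith
  unfold DS
  rw [hlam, hcardB, hsumB]
  have hint : 0 < (2 * σ q - lamS σ C A) * ((A.card : ℝ) * (t - 1)) :=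
    mul_pos (by linarith) (mul_pos hm0 (by linarith))
  nlinarith [hint, key]
end

section
/- Let σ_1² ≥ σ_2² ≥ ⋯ ≥ σ_N² > 0 and C > 0. For a nonempty subset S ⊆ {1,…,N}, define λ_S = 2 e^{−2C/|S|} (∏_{k∈S} σ_k²)^{1/|S|} and D(S) = (λ_S/2)·|S| − ∑_{k∈S} σ_k². Fix m with 1 ≤ m ≤ N, and suppose that every subset S ⊆ {1,…,N} of size m satisfies the active condition λ_S < 2 min_{k∈S} σ_k². Then for every subset A ⊆ {1,…,N} of size m, D({1,…,m}) ≤ D(A); that is, the optimal active set of size m is {1,…,m}, the set of the m largest source variances. -/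
/-!
Trade an index `j ∈ A` for a smaller index `i ∉ A`, so that `σ i ≥ σ j`. The geometric mean
`G = (∏_{k∈A} σ k)^{1/m}` gets multiplied by `(σ i / σ j)^{1/m} ≤ 1 + (σ i / σ j - 1)/m`
(Bernoulli), so the term `m e^{-2C/m} G` of `D` grows by at most
`e^{-2C/m} G (σ i / σ j - 1)`, which the active condition `e^{-2C/m} G < σ j` bounds by
`σ i - σ j`, exactly the growth of `∑_{k∈A} σ k`. Hence no such trade increases `D`, and
finitely many trades lead from any `A` to `{0, …, m - 1}`.
-/

open BigOperators

open Finset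

lemma mul_rpow_sub_le_of_mul_rpow_le {a b P c p : ℝ} (ha : 0 < a) (hab : a ≤ b) (hP : 0 ≤ P)
    (hp₀ : 0 ≤ p) (hp₁ : p ≤ 1) (hc : 0 ≤ c) (hcap : c * (a * P) ^ p ≤ a) :
    c * ((b * P) ^ p - (a * P) ^ p) ≤ p * (b - a) := by
  have ht : 0 ≤ b / a - 1 := by rw [sub_nonneg, one_le_div ha]; exact hab
  have hbern : (1 + (b / a - 1)) ^ p ≤ 1 + p * (b / a - 1) :=
    rpow_one_add_le_one_add_mul_self (by linarith) hp₀ hp₁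
  calc c * ((b * P) ^ p - (a * P) ^ p)
      = c * (((1 + (b / a - 1)) ^ p - 1) * (a * P) ^ p) := by
        rw [show b * P = (1 + (b / a - 1)) * (a * P) by field_simp; ring,
          Real.mul_rpow (by linarith) (by positivity)]
        ring
    _ ≤ c * (p * (b / a - 1) * (a * P) ^ p) := by gcongr; linarith
    _ = p * (b / a - 1) * (c * (a * P) ^ p) := by ring
    _ ≤ p * (b / a - 1) * a := by gcongr
    _ = p * (b - a) := by field_simp

lemma DS_insert_erase_le {N : ℕ} {σ : Fin N → ℝ} (hσ : ∀ k, 0 < σ k) (C : ℝ)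
    {A : Finset (Fin N)} {i j : Fin N} (hjA : j ∈ A) (hiA : i ∉ A) (hij : σ j ≤ σ i)
    (hact : lamS σ C A < 2 * σ j) :
    DS σ C (insert i (A.erase j)) ≤ DS σ C A := by
  have hiB : i ∉ A.erase j := fun h => hiA (mem_of_mem_erase h)
  have hcard : (insert i (A.erase j)).card = A.card := by
    rw [card_insert_of_notMem hiB, card_erase_add_one hjA]
  have hn : (1 : ℝ) ≤ A.card := by exact_mod_cast card_pos.mpr ⟨j, hjA⟩
  have hP : 0 ≤ ∏ k ∈ A.erase j, σ k := prod_nonneg fun k _ => (hσ k).le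
  have hlamA : lamS σ C A = 2 * (Real.exp (-2 * C / A.card) *
      (σ j * ∏ k ∈ A.erase j, σ k) ^ (1 / (A.card : ℝ))) := by
    rw [lamS, mul_prod_erase A σ hjA]; ring
  have hbound := mul_rpow_sub_le_of_mul_rpow_le (hσ j) hij hP (by positivity)
    ((div_le_one (by linarith)).mpr hn) (Real.exp_nonneg _)
    (by rw [hlamA] at hact; linear_combination hact / 2)
  have hcancel : (A.card : ℝ) * (1 / A.card * (σ i - σ j)) = σ i - σ j := by
    field_simp
  calc DS σ C (insert i (A.erase j))
      = A.card * (Real.exp (-2 * C / A.card) *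
          (σ i * ∏ k ∈ A.erase j, σ k) ^ (1 / (A.card : ℝ)))
        - (σ i + ∑ k ∈ A.erase j, σ k) := by
        rw [DS, lamS, hcard, prod_insert hiB, sum_insert hiB]; ring
    _ ≤ A.card * (Real.exp (-2 * C / A.card) *
          (σ j * ∏ k ∈ A.erase j, σ k) ^ (1 / (A.card : ℝ)))
        - (σ j + ∑ k ∈ A.erase j, σ k) := by
        have h := mul_le_mul_of_nonneg_left hbound (by linarith : (0 : ℝ) ≤ A.card)
        rw [hcancel] at h
        linear_combination h
    _ = DS σ C A := by rw [DS, hlamA, ← add_sum_erase A σ hjA]; ring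

/-- The induction is on the sum of the indices, which every trade lowers. -/
lemma Fin.apply_filter_val_lt_le_of_exchange {N m : ℕ} {β : Type*} [Preorder β]
    (f : Finset (Fin N) → β)
    (hexch : ∀ A : Finset (Fin N), A.card = m → ∀ i ∉ A, ∀ j ∈ A, i < j →
      f (insert i (A.erase j)) ≤ f A)
    (A : Finset (Fin N)) (hA : A.card = m) :
    f (univ.filter fun k : Fin N => (k : ℕ) < m) ≤ f A := by
  set I := univ.filter fun k : Fin N => (k : ℕ) < m
  have hI : I.card = m := by
    rw [Fin.card_filter_val_lt, min_eq_right (hA ▸ card_le_univ A |>.trans_eq (card_fin N))]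
  induction hs : ∑ k ∈ A, (k : ℕ) using Nat.strong_induction_on generalizing A with
  | _ s ih =>
    by_cases hIA : I ⊆ A
    · rw [eq_of_subset_of_card_le hIA (by rw [hA, hI])]
    obtain ⟨i, hiI, hiA⟩ := not_subset.mp hIA
    obtain ⟨j, hjA, hjI⟩ : ∃ j ∈ A, j ∉ I := by
      by_contra! hAI
      exact hIA (eq_of_subset_of_card_le hAI (by rw [hA, hI])).ge
    have hij : (i : ℕ) < j := by
      simp only [I, mem_filter, mem_univ, true_and, not_lt] at hiI hjI
      omega
    have hiB : i ∉ A.erase j := fun h => hiA (mem_of_mem_erase h)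
    have hsum : ∑ k ∈ insert i (A.erase j), (k : ℕ) < s := by
      rw [sum_insert hiB, ← hs, ← add_sum_erase A _ hjA]
      omega
    calc f I ≤ f (insert i (A.erase j)) :=
          ih _ hsum _ (by rw [card_insert_of_notMem hiB, card_erase_add_one hjA, hA]) rfl
      _ ≤ f A := hexch A hA i hiA j hjA hij

theorem stmt_13_general {N : ℕ} (σ : Fin N → ℝ) (hσ : ∀ n, 0 < σ n)
    (hsorted : ∀ i j : Fin N, i ≤ j → σ j ≤ σ i)
    (C : ℝ) (m : ℕ)
    (hactive : ∀ S : Finset (Fin N), S.card = m → ∀ k ∈ S, lamS σ C S < 2 * σ k) :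
    ∀ A : Finset (Fin N), A.card = m →
      DS σ C (Finset.univ.filter fun k : Fin N => (k : ℕ) < m) ≤ DS σ C A :=
  Fin.apply_filter_val_lt_le_of_exchange (DS σ C) fun A hA i hiA j hjA hij =>
    DS_insert_erase_le hσ C hjA hiA (hsorted i j hij.le) (hactive A hA j hjA)

/-- If the variances are sorted in descending order and every size-m
subset satisfies the active condition λ_S < 2 min_{k∈S} σ_k², then the optimal active
set of size m is {1,…,m}: D({1,…,m}) ≤ D(A) for every subset A of size m. -/
theorem stmt_13 {N : ℕ} (σ : Fin N → ℝ) (hσ : ∀ n, 0 < σ n)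
    (hsorted : ∀ i j : Fin N, i ≤ j → σ j ≤ σ i)
    (C : ℝ) (hC : 0 < C) (m : ℕ) (hm1 : 1 ≤ m) (hmN : m ≤ N)
    (hactive : ∀ S : Finset (Fin N), S.card = m → ∀ k ∈ S, lamS σ C S < 2 * σ k) :
    ∀ A : Finset (Fin N), A.card = m →
      DS σ C (Finset.univ.filter fun k : Fin N => (k : ℕ) < m) ≤ DS σ C A :=
  stmt_13_general σ hσ hsorted C m hactive
end

section
/- Let Σ_xx = diag(σ_1², …, σ_N²) with σ_1² ≥ ⋯ ≥ σ_N² > 0, let M ≤ N, and C > 0. Suppose λ★ > 0 and a ∈ {1,…,M} satisfy: λ★ < 2σ_k² for all k ≤ a, λ★ ≥ 2σ_k² for all a < k ≤ M, and (1/2) ∑_{k=1}^{a} ln(2σ_k²/λ★) = C. Then for every real M×N matrix A with A Aᵀ = I_M, every diagonal M×M matrix Σ_ww with positive diagonal entries, and every real N×M matrix B such that the mutual-information constraint (1/2) ln det(Σ_ww⁻¹ (A Σ_xx Aᵀ + Σ_ww)) ≤ C holds, the mean-squared error satisfies Tr(Σ_xx − 2 B A Σ_xx + B (A Σ_xx Aᵀ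 + Σ_ww) Bᵀ) ≥ ∑_{n=a+1}^{N} σ_n² + a·λ★/2. -/
/-
Completing the square in `B` bounds the error below by `tr Σ - tr ((1 + K Kᵀ)⁻¹ K Σ Kᵀ)` for the
whitened encoder `K = W^(-1/2) A Σ^(1/2)`, and the rate constraint reads
`log det (1 + K Kᵀ) ≤ 2 C`. After an orthogonal change of coordinates `K Kᵀ = diag d`, row `i`
of `K` contributes `(1 + d i)⁻¹ ∑ n, σ n K i n ^ 2`, an average of the `σ n` with weights
`K i n ^ 2 / d i`. Pricing rate at `λ / 2`, each such contribution minus `λ / 2 * log (1 + d i)`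
is at most the same average of the gains `waterfillingGain λ (σ n)`. The weights, summed over
`i`, are the diagonal of an orthogonal projection of rank at most `M`, so the total is at most
the sum of the `M` largest gains, which the water-filling conditions evaluate to
`∑ n < a, σ n - a λ / 2 - λ C`.
-/

open Matrix Finset Real

/-- `waterfillingGain lam s = ⨆ d ≥ 0, d / (1 + d) * s - lam / 2 * log (1 + d)`:
the error reduction a mode of variance `s` buys at signal-to-noise ratio `d`, net of its rate
priced at `lam / 2` per nat. The optimum is `d = 2 * s / lam - 1` when this is positive. -/
noncomputable def waterfillingGain (lam s : ℝ) : ℝ :=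
  if 2 * s ≤ lam then 0 else s - lam / 2 - lam / 2 * log (2 * s / lam)

section waterfillingGain

variable {lam : ℝ}

lemma waterfillingGain_of_lt {s : ℝ} (h : lam < 2 * s) :
    waterfillingGain lam s = s - lam / 2 - lam / 2 * log (2 * s / lam) :=
  if_neg h.not_ge

lemma waterfillingGain_of_le {s : ℝ} (h : 2 * s ≤ lam) : waterfillingGain lam s = 0 :=
  if_pos h

lemma waterfillingGain_nonneg (hlam : 0 < lam) (s : ℝ) : 0 ≤ waterfillingGain lam s := by
  rcases le_or_gt (2 * s) lam with h | h
  · rw [waterfillingGain_of_le h]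
  · rw [waterfillingGain_of_lt h]
    have hs : 0 < s := by linarith
    have hlog : lam / 2 * log (2 * s / lam) ≤ lam / 2 * (2 * s / lam - 1) := by
      gcongr; exact log_le_sub_one_of_pos (by positivity)
    have heq : lam / 2 * (2 * s / lam - 1) = s - lam / 2 := by field_simp
    linarith

lemma waterfillingGain_mono (hlam : 0 < lam) : Monotone (waterfillingGain lam) := by
  intro x y hxy
  rcases le_or_gt (2 * x) lam with hx | hx
  · rw [waterfillingGain_of_le hx]
    exact waterfillingGain_nonneg hlam y
  have hx0 : 0 < x := by linarith
  have hy0 : 0 < y := by linarith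
  rw [waterfillingGain_of_lt hx, waterfillingGain_of_lt (by linarith)]
  have hlog : log (2 * y / lam) = log (2 * x / lam) + log (y / x) := by
    rw [← log_mul (by positivity) (by positivity)]
    congr 1; field_simp
  have h1 : lam / 2 * log (y / x) ≤ lam / 2 * (y / x - 1) := by
    gcongr; exact log_le_sub_one_of_pos (by positivity)
  have h2 : lam / 2 * (y / x - 1) ≤ y - x := by
    rw [show lam / 2 * (y / x - 1) = lam / (2 * x) * (y - x) by field_simp]
    have : lam / (2 * x) ≤ 1 := (div_le_one (by positivity)).mpr hx.le
    nlinarith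
  rw [hlog]
  linarith

lemma div_one_add_mul_le_waterfillingGain_add (hlam : 0 < lam) {s d : ℝ} (hd : 0 ≤ d) :
    d / (1 + d) * s ≤ waterfillingGain lam s + lam / 2 * log (1 + d) := by
  have hd1 : 0 < 1 + d := by linarith
  rcases le_or_gt (2 * s) lam with h | h
  · rw [waterfillingGain_of_le h, zero_add]
    have hlog : d / (1 + d) ≤ log (1 + d) := by
      have := one_sub_inv_le_log_of_pos hd1
      rwa [show 1 - (1 + d)⁻¹ = d / (1 + d) by field_simp; ring] at this
    calc d / (1 + d) * s ≤ d / (1 + d) * (lam / 2) := by gcongr; linarith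
      _ ≤ log (1 + d) * (lam / 2) := by gcongr
      _ = lam / 2 * log (1 + d) := mul_comm _ _
  · rw [waterfillingGain_of_lt h]
    have hs : 0 < s := by linarith
    have hz := log_le_sub_one_of_pos (show 0 < 2 * s / (lam * (1 + d)) by positivity)
    rw [log_div (by positivity) (by positivity), log_mul hlam.ne' hd1.ne',
      ← sub_sub, ← log_div (by positivity) hlam.ne'] at hz
    have h1 : lam / 2 * (2 * s / (lam * (1 + d)) - 1) = s / (1 + d) - lam / 2 := by
      field_simp
    have h2 : d / (1 + d) * s = s - s / (1 + d) := by field_simp; ring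
    nlinarith

lemma inv_one_add_mul_sum_le {n : Type*} [Fintype n] (hlam : 0 < lam) (v σ : n → ℝ) :
    (1 + ∑ j, v j ^ 2)⁻¹ * ∑ j, σ j * v j ^ 2 ≤
      ∑ j, waterfillingGain lam (σ j) * (v j ^ 2 * (∑ k, v k ^ 2)⁻¹) +
        lam / 2 * log (1 + ∑ j, v j ^ 2) := by
  set d := ∑ j, v j ^ 2 with hd
  rcases (sum_nonneg fun j _ => sq_nonneg (v j) : 0 ≤ d).eq_or_lt with h0 | hpos
  · have hv : ∀ j, v j = 0 := fun j => by
      simpa using (sum_eq_zero_iff_of_nonneg fun j _ => sq_nonneg (v j)).mp h0.symm j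
    simp [hv, d]
  have hd0 : d ≠ 0 := hpos.ne'
  have hw : ∑ j, v j ^ 2 * d⁻¹ = 1 := by rw [← sum_mul, ← hd, mul_inv_cancel₀ hd0]
  calc (1 + d)⁻¹ * ∑ j, σ j * v j ^ 2 = ∑ j, v j ^ 2 * d⁻¹ * (d / (1 + d) * σ j) := by
        rw [mul_sum]
        refine sum_congr rfl fun j _ => ?_
        field_simp
    _ ≤ ∑ j, v j ^ 2 * d⁻¹ * (waterfillingGain lam (σ j) + lam / 2 * log (1 + d)) := by
        gcongr with j
        exact div_one_add_mul_le_waterfillingGain_add hlam hpos.le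
    _ = _ := by
        simp only [mul_add, sum_add_distrib, ← sum_mul, hw, one_mul]
        congr 1
        exact sum_congr rfl fun j _ => mul_comm _ _

end waterfillingGain

lemma sum_mul_le_sum_filter_lt {N m : ℕ} {f α : Fin N → ℝ} (hf : Antitone f)
    (hf0 : ∀ n, 0 ≤ f n) (hα0 : ∀ n, 0 ≤ α n) (hα1 : ∀ n, α n ≤ 1) (hαm : ∑ n, α n ≤ m) :
    ∑ n, f n * α n ≤ ∑ n ∈ univ.filter (fun n : Fin N => (n : ℕ) < m), f n := by
  set c : ℝ := if h : m < N then f ⟨m, h⟩ else 0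
  have hc0 : 0 ≤ c := by unfold c; split_ifs <;> simp [hf0]
  have hterm : ∀ n : Fin N, f n * α n - (if (n : ℕ) < m then f n else 0) ≤
      c * (α n - if (n : ℕ) < m then 1 else 0) := by
    intro n
    split_ifs with hn
    · have hcn : c ≤ f n := by
        unfold c; split_ifs with h
        · exact hf (Fin.mk_le_of_le_val hn.le)
        · exact hf0 n
      nlinarith [hα1 n]
    · have hm : m < N := by omega
      have hcn : f n ≤ c := by
        simp only [c, dif_pos hm]; exact hf (by simp [Fin.le_def]; omega)
      nlinarith [hα0 n]
  have hsum := sum_le_sum fun n (_ : n ∈ univ) => hterm n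
  rw [sum_sub_distrib, ← mul_sum, sum_sub_distrib, ← sum_filter,
    ← sum_filter, sum_const, nsmul_one, Fin.card_filter_val_lt] at hsum
  have : c * (∑ n, α n - (min N m : ℕ)) ≤ 0 := by
    rcases lt_or_ge m N with hm | hm
    · rw [min_eq_right hm.le]; nlinarith
    · simp [c, not_lt.mpr hm]
  linarith

lemma diag_le_one_of_mul_self_eq {n : Type*} [Fintype n] {P : Matrix n n ℝ} (hPT : Pᵀ = P)
    (hPP : P * P = P) (j : n) : P j j ≤ 1 := by
  have hsq : P j j = ∑ k, P j k ^ 2 := by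
    conv_lhs => rw [← hPP]
    rw [mul_apply]
    refine sum_congr rfl fun k _ => ?_
    rw [sq, ← transpose_apply P k j, hPT]
  have : P j j ^ 2 ≤ P j j := hsq ▸ single_le_sum (fun k _ => sq_nonneg (P j k)) (mem_univ j)
  nlinarith

lemma sum_sq_eq_of_mul_transpose_eq_diagonal {m n : Type*} [Fintype n] [DecidableEq m]
    {V : Matrix m n ℝ} {d : m → ℝ} (hV : V * Vᵀ = diagonal d) (i : m) :
    ∑ j, V i j ^ 2 = d i := by
  simpa [mul_apply, sq] using congr_fun₂ hV i i

section Projection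

variable {m n : Type*} [Fintype m] [Fintype n] [DecidableEq m]

lemma sum_sq_mul_inv_le_one {V : Matrix m n ℝ} {d : m → ℝ} (hV : V * Vᵀ = diagonal d) (j : n) :
    ∑ i, V i j ^ 2 * (d i)⁻¹ ≤ 1 := by
  -- the orthogonal projection onto the row space of `V`; `(d i)⁻¹ = 0` when `d i = 0`
  set P := Vᵀ * diagonal d⁻¹ * V
  have hPT : Pᵀ = P := by simp [P, transpose_mul, Matrix.mul_assoc]
  have hPP : P * P = P := by
    calc P * P = Vᵀ * (diagonal d⁻¹ * (V * Vᵀ) * diagonal d⁻¹) * V := by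
          simp only [P, Matrix.mul_assoc]
      _ = P := by
          rw [hV, diagonal_mul_diagonal, diagonal_mul_diagonal]
          congr 3
          funext i
          rcases eq_or_ne (d i) 0 with h | h <;> simp [h]
  have hPjj : P j j = ∑ i, V i j ^ 2 * (d i)⁻¹ := by
    rw [show P j j = (Vᵀ * diagonal d⁻¹ * V) j j from rfl, mul_apply]
    refine sum_congr rfl fun i _ => ?_
    rw [mul_diagonal, transpose_apply, Pi.inv_apply]
    ring
  exact hPjj ▸ diag_le_one_of_mul_self_eq hPT hPP j

lemma sum_sum_sq_mul_inv_le_card {V : Matrix m n ℝ} {d : m → ℝ} (hV : V * Vᵀ = diagonal d) :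
    ∑ j, ∑ i, V i j ^ 2 * (d i)⁻¹ ≤ Fintype.card m := by
  rw [sum_comm]
  calc ∑ i, ∑ j, V i j ^ 2 * (d i)⁻¹ = ∑ i : m, d i * (d i)⁻¹ := by
        simp_rw [← sum_mul, sum_sq_eq_of_mul_transpose_eq_diagonal hV]
    _ ≤ ∑ _i : m, (1 : ℝ) := sum_le_sum fun i _ => by
        rcases eq_or_ne (d i) 0 with h | h <;> simp [h]
    _ = Fintype.card m := by simp

end Projection

section Orthogonal

variable {m n : Type*} [Fintype m] [Fintype n] [DecidableEq m]

lemma exists_orthogonal_mul_mul_transpose_eq_diagonal (K : Matrix m n ℝ) :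
    ∃ O ∈ orthogonalGroup m ℝ, ∃ d : m → ℝ, O * K * (O * K)ᵀ = diagonal d := by
  have hT : (K * Kᵀ).IsHermitian := by
    simpa using isHermitian_mul_conjTranspose_self K
  refine ⟨star hT.eigenvectorUnitary, (star hT.eigenvectorUnitary).2, hT.eigenvalues, ?_⟩
  simpa [RCLike.ofReal_real_eq_id, star_eq_conjTranspose, transpose_mul, Matrix.mul_assoc]
    using hT.conjStarAlgAut_star_eigenvectorUnitary

lemma one_add_mul_mul_transpose_of_mem_orthogonalGroup {O : Matrix m m ℝ}
    (hO : O ∈ orthogonalGroup m ℝ) (K : Matrix m n ℝ) :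
    1 + O * K * (O * K)ᵀ = O * (1 + K * Kᵀ) * Oᵀ := by
  rw [transpose_mul, Matrix.mul_add, Matrix.add_mul, Matrix.mul_one,
    (mem_orthogonalGroup_iff m ℝ).mp hO]
  simp only [Matrix.mul_assoc]

lemma det_mul_mul_transpose_of_mem_orthogonalGroup {O : Matrix m m ℝ}
    (hO : O ∈ orthogonalGroup m ℝ) (X : Matrix m m ℝ) : det (O * X * Oᵀ) = det X := by
  rw [det_mul, det_mul, mul_comm, ← mul_assoc, ← det_mul, (mem_orthogonalGroup_iff' m ℝ).mp hO,
    det_one, one_mul]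

lemma trace_inv_mul_of_mem_orthogonalGroup {O : Matrix m m ℝ} (hO : O ∈ orthogonalGroup m ℝ)
    (X Y : Matrix m m ℝ) : trace ((O * X * Oᵀ)⁻¹ * (O * Y * Oᵀ)) = trace (X⁻¹ * Y) := by
  have hOO : Oᵀ * O = 1 := (mem_orthogonalGroup_iff' m ℝ).mp hO
  have hOinv : O⁻¹ = Oᵀ := inv_eq_left_inv hOO
  have hOTinv : Oᵀ⁻¹ = O := inv_eq_left_inv ((mem_orthogonalGroup_iff m ℝ).mp hO)
  rw [Matrix.mul_inv_rev, Matrix.mul_inv_rev, hOinv, hOTinv]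
  calc trace (O * (X⁻¹ * Oᵀ) * (O * Y * Oᵀ)) = trace (O * (X⁻¹ * (Oᵀ * O) * Y) * Oᵀ) := by
        simp only [Matrix.mul_assoc]
    _ = trace (O * (X⁻¹ * Y) * Oᵀ) := by rw [hOO, Matrix.mul_one]
    _ = trace (Oᵀ * O * (X⁻¹ * Y)) := by rw [trace_mul_comm, Matrix.mul_assoc]
    _ = trace (X⁻¹ * Y) := by rw [hOO, Matrix.one_mul]

end Orthogonal

section Diagonal

variable {m n : Type*} [Fintype m] [Fintype n] [DecidableEq m]

lemma trace_inv_one_add_mul_eq_of_mul_transpose_eq_diagonal [DecidableEq n] {V : Matrix m n ℝ}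
    {d : m → ℝ} (hV : V * Vᵀ = diagonal d) (σ : n → ℝ) :
    trace ((1 + V * Vᵀ)⁻¹ * (V * diagonal σ * Vᵀ)) =
      ∑ i, (1 + d i)⁻¹ * ∑ j, σ j * V i j ^ 2 := by
  have hd0 : ∀ i, 0 ≤ d i := fun i =>
    sum_sq_eq_of_mul_transpose_eq_diagonal hV i ▸ sum_nonneg fun j _ => sq_nonneg _
  have hinv : (1 + V * Vᵀ)⁻¹ = diagonal fun i => (1 + d i)⁻¹ := by
    refine inv_eq_left_inv ?_
    rw [hV, ← diagonal_one, diagonal_add, diagonal_mul_diagonal]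
    congr 1
    funext i
    exact inv_mul_cancel₀ (by linarith [hd0 i])
  rw [hinv, trace]
  refine sum_congr rfl fun i _ => ?_
  rw [diag_apply, diagonal_mul, mul_apply]
  congr 1
  refine sum_congr rfl fun j _ => ?_
  rw [mul_diagonal, transpose_apply]
  ring

lemma det_one_add_mul_transpose_eq_of_mul_transpose_eq_diagonal {V : Matrix m n ℝ} {d : m → ℝ}
    (hV : V * Vᵀ = diagonal d) : det (1 + V * Vᵀ) = ∏ i, (1 + d i) := by
  rw [hV, ← diagonal_one, diagonal_add, det_diagonal]

end Diagonal

lemma trace_inv_one_add_mul_le {N M : ℕ} {lam : ℝ} (hlam : 0 < lam) {σ : Fin N → ℝ}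
    (hσ : Antitone σ) (K : Matrix (Fin M) (Fin N) ℝ) :
    trace ((1 + K * Kᵀ)⁻¹ * (K * diagonal σ * Kᵀ)) ≤
      ∑ n ∈ univ.filter (fun n : Fin N => (n : ℕ) < M), waterfillingGain lam (σ n) +
        lam / 2 * log (det (1 + K * Kᵀ)) := by
  obtain ⟨O, hO, d, hV⟩ := exists_orthogonal_mul_mul_transpose_eq_diagonal K
  set V := O * K
  have hd : ∀ i, ∑ j, V i j ^ 2 = d i := sum_sq_eq_of_mul_transpose_eq_diagonal hV
  have hd0 : ∀ i, 0 ≤ d i := fun i => hd i ▸ sum_nonneg fun j _ => sq_nonneg _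
  have htr : trace ((1 + K * Kᵀ)⁻¹ * (K * diagonal σ * Kᵀ)) =
      ∑ i, (1 + d i)⁻¹ * ∑ j, σ j * V i j ^ 2 := by
    rw [← trace_inv_one_add_mul_eq_of_mul_transpose_eq_diagonal hV,
      one_add_mul_mul_transpose_of_mem_orthogonalGroup hO,
      ← trace_inv_mul_of_mem_orthogonalGroup hO]
    simp only [V, transpose_mul, Matrix.mul_assoc]
  have hdet : det (1 + K * Kᵀ) = ∏ i, (1 + d i) := by
    rw [← det_one_add_mul_transpose_eq_of_mul_transpose_eq_diagonal hV,
      one_add_mul_mul_transpose_of_mem_orthogonalGroup hO,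
      det_mul_mul_transpose_of_mem_orthogonalGroup hO]
  rw [htr, hdet, log_prod (fun i _ => by linarith [hd0 i]), mul_sum]
  calc ∑ i, (1 + d i)⁻¹ * ∑ j, σ j * V i j ^ 2
      ≤ ∑ i, (∑ j, waterfillingGain lam (σ j) * (V i j ^ 2 * (d i)⁻¹) +
          lam / 2 * log (1 + d i)) := by
        gcongr with i
        simpa only [hd] using inv_one_add_mul_sum_le hlam (V i) σ
    _ = ∑ j, waterfillingGain lam (σ j) * ∑ i, V i j ^ 2 * (d i)⁻¹ +
          ∑ i, lam / 2 * log (1 + d i) := by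
        simp only [sum_add_distrib, mul_sum]
        rw [sum_comm]
    _ ≤ _ := by
        gcongr
        refine sum_mul_le_sum_filter_lt (fun _ _ h => waterfillingGain_mono hlam (hσ h))
          (fun _ => waterfillingGain_nonneg hlam _)
          (fun j => sum_nonneg fun i _ => mul_nonneg (sq_nonneg _) (inv_nonneg.mpr (hd0 i)))
          (sum_sq_mul_inv_le_one hV) ?_
        simpa using sum_sum_sq_mul_inv_le_card hV

lemma neg_trace_transpose_mul_inv_mul_le {m n : Type*} [Fintype m] [Fintype n] [DecidableEq m]
    {R : Matrix m m ℝ} (hR : R.PosDef) (G : Matrix m n ℝ) (B : Matrix n m ℝ) :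
    -trace (Gᵀ * R⁻¹ * G) ≤ trace (B * R * Bᵀ) - 2 * trace (B * G) := by
  have hRT : Rᵀ = R := by simpa using hR.isHermitian.eq
  have hdet : IsUnit R.det := (isUnit_iff_isUnit_det R).mp hR.isUnit
  set E := B - Gᵀ * R⁻¹
  have hE : E * R * Eᵀ = B * R * Bᵀ - B * G - (B * G)ᵀ + Gᵀ * R⁻¹ * G := by
    simp only [E, Matrix.sub_mul, Matrix.mul_sub, transpose_sub, transpose_mul,
      transpose_nonsing_inv, transpose_transpose, hRT, Matrix.mul_assoc,
      nonsing_inv_mul_cancel_left R _ hdet, mul_nonsing_inv_cancel_left R _ hdet]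
    abel
  have hnonneg := (hR.posSemidef.mul_mul_conjTranspose_same E).trace_nonneg
  rw [conjTranspose_eq_transpose_of_trivial, hE] at hnonneg
  simp only [trace_add, trace_sub, trace_transpose] at hnonneg
  linarith

section Whitening

variable {m n : Type*} [Fintype m] [Fintype n] [DecidableEq m] {A K : Matrix m n ℝ}
  {S Sₕ : Matrix n n ℝ} {W Wₕ : Matrix m m ℝ}

lemma mul_mul_transpose_add_eq (hSₕ : Sₕᵀ = Sₕ) (hS : Sₕ * Sₕ = S) (hWₕ : Wₕᵀ = Wₕ)
    (hW : Wₕ * Wₕ = W) (hK : Wₕ * K = A * Sₕ) :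
    A * S * Aᵀ + W = Wₕ * (1 + K * Kᵀ) * Wₕ := by
  have hKT : Kᵀ * Wₕ = Sₕ * Aᵀ := by
    rw [← hWₕ, ← transpose_mul, hK, transpose_mul, hSₕ]
  calc A * S * Aᵀ + W = Wₕ * K * (Kᵀ * Wₕ) + Wₕ * Wₕ := by
        rw [hK, hKT, ← hS, hW]; simp only [Matrix.mul_assoc]
    _ = Wₕ * (1 + K * Kᵀ) * Wₕ := by
        simp only [Matrix.mul_add, Matrix.add_mul, Matrix.mul_one, Matrix.mul_assoc]; abel

lemma det_inv_mul_mul_mul_transpose_add (hSₕ : Sₕᵀ = Sₕ) (hS : Sₕ * Sₕ = S) (hWₕ : Wₕᵀ = Wₕ)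
    (hW : Wₕ * Wₕ = W) (hK : Wₕ * K = A * Sₕ) (hu : IsUnit Wₕ.det) :
    det (W⁻¹ * (A * S * Aᵀ + W)) = det (1 + K * Kᵀ) := by
  rw [mul_mul_transpose_add_eq hSₕ hS hWₕ hW hK, ← hW, Matrix.mul_inv_rev]
  simp only [Matrix.mul_assoc, nonsing_inv_mul_cancel_left Wₕ _ hu]
  rw [← Matrix.mul_assoc, det_conj' ((isUnit_iff_isUnit_det Wₕ).mpr hu)]

lemma trace_transpose_mul_inv_mul_eq (hSₕ : Sₕᵀ = Sₕ) (hS : Sₕ * Sₕ = S) (hWₕ : Wₕᵀ = Wₕ)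
    (hW : Wₕ * Wₕ = W) (hK : Wₕ * K = A * Sₕ) (hu : IsUnit Wₕ.det) :
    trace ((A * S)ᵀ * (A * S * Aᵀ + W)⁻¹ * (A * S)) = trace ((1 + K * Kᵀ)⁻¹ * (K * S * Kᵀ)) := by
  have hAS : A * S = Wₕ * K * Sₕ := by rw [hK, ← hS, Matrix.mul_assoc]
  have hASt : (A * S)ᵀ = Sₕ * Kᵀ * Wₕ := by
    rw [hAS, transpose_mul, transpose_mul, hSₕ, hWₕ, Matrix.mul_assoc]
  rw [mul_mul_transpose_add_eq hSₕ hS hWₕ hW hK, Matrix.mul_inv_rev, Matrix.mul_inv_rev, hASt,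
    hAS]
  calc trace (Sₕ * Kᵀ * Wₕ * (Wₕ⁻¹ * ((1 + K * Kᵀ)⁻¹ * Wₕ⁻¹)) * (Wₕ * K * Sₕ))
      = trace (Sₕ * (Kᵀ * ((1 + K * Kᵀ)⁻¹ * (K * Sₕ)))) := by
        simp only [Matrix.mul_assoc, mul_nonsing_inv_cancel_left Wₕ _ hu,
          nonsing_inv_mul_cancel_left Wₕ _ hu]
    _ = trace (Kᵀ * ((1 + K * Kᵀ)⁻¹ * (K * (Sₕ * Sₕ)))) := by
        rw [trace_mul_comm]; simp only [Matrix.mul_assoc]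
    _ = trace ((1 + K * Kᵀ)⁻¹ * (K * S * Kᵀ)) := by
        rw [trace_mul_comm, hS]; simp only [Matrix.mul_assoc]

end Whitening

lemma sum_waterfillingGain_eq {N M a : ℕ} {lam : ℝ} {σ : Fin N → ℝ} (haM : a ≤ M)
    (haN : a ≤ N)
    (hact : ∀ k : Fin N, (k : ℕ) < a → lam < 2 * σ k)
    (hinact : ∀ k : Fin N, a ≤ (k : ℕ) → (k : ℕ) < M → 2 * σ k ≤ lam) :
    ∑ n ∈ univ.filter (fun n : Fin N => (n : ℕ) < M), waterfillingGain lam (σ n) =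
      ∑ n ∈ univ.filter (fun n : Fin N => (n : ℕ) < a), σ n - a * lam / 2 -
        lam / 2 * ∑ n ∈ univ.filter (fun n : Fin N => (n : ℕ) < a), log (2 * σ n / lam) := by
  have hsub : univ.filter (fun n : Fin N => (n : ℕ) < a) ⊆
      univ.filter (fun n : Fin N => (n : ℕ) < M) := by
    intro n
    simp only [mem_filter, mem_univ, true_and]
    omega
  rw [← sum_subset hsub fun n hnM hna => waterfillingGain_of_le (hinact n
      (by simpa using hna) (by simpa using hnM))]
  rw [sum_congr rfl fun n hn => waterfillingGain_of_lt (hact n (by simpa using hn)),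
    sum_sub_distrib, sum_sub_distrib, sum_const, Fin.card_filter_val_lt, min_eq_right haN,
    mul_sum]
  simp only [nsmul_eq_mul]
  ring

theorem stmt_14_general {N M : ℕ} (hMN : M ≤ N)
    (σ : Fin N → ℝ) (hσ : ∀ n, 0 < σ n)
    (hsorted : ∀ i j : Fin N, i ≤ j → σ j ≤ σ i)
    (C : ℝ)
    (lam : ℝ) (hlam : 0 < lam)
    (a : ℕ) (haM : a ≤ M)
    (hact : ∀ k : Fin N, (k : ℕ) < a → lam < 2 * σ k)
    (hinact : ∀ k : Fin N, a ≤ (k : ℕ) → (k : ℕ) < M → 2 * σ k ≤ lam)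
    (hrate : (1 / 2 : ℝ) *
        ∑ k ∈ Finset.univ.filter (fun k : Fin N => (k : ℕ) < a),
          Real.log (2 * σ k / lam) = C) :
    ∀ A : Matrix (Fin M) (Fin N) ℝ, A * Aᵀ = 1 →
    ∀ w : Fin M → ℝ, (∀ i, 0 < w i) →
    ∀ B : Matrix (Fin N) (Fin M) ℝ,
      (1 / 2 : ℝ) * Real.log
          (((Matrix.diagonal w)⁻¹ *
            (A * Matrix.diagonal σ * Aᵀ + Matrix.diagonal w)).det) ≤ C →
      Matrix.trace (Matrix.diagonal σ - (2 : ℝ) • (B * A * Matrix.diagonal σ)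
          + B * (A * Matrix.diagonal σ * Aᵀ + Matrix.diagonal w) * Bᵀ) ≥
        (∑ n ∈ Finset.univ.filter (fun n : Fin N => a ≤ (n : ℕ)), σ n)
          + (a : ℝ) * lam / 2 := by
  intro A _ w hw B hMI
  set Sₕ : Matrix (Fin N) (Fin N) ℝ := diagonal fun n => √(σ n)
  set Wₕ : Matrix (Fin M) (Fin M) ℝ := diagonal fun i => √(w i)
  have hS : Sₕ * Sₕ = diagonal σ := by
    simp only [Sₕ, diagonal_mul_diagonal, mul_self_sqrt (hσ _).le]
  have hW : Wₕ * Wₕ = diagonal w := by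
    simp only [Wₕ, diagonal_mul_diagonal, mul_self_sqrt (hw _).le]
  have hSₕ : Sₕᵀ = Sₕ := diagonal_transpose _
  have hWₕ : Wₕᵀ = Wₕ := diagonal_transpose _
  have hu : IsUnit Wₕ.det := by simp [Wₕ, prod_ne_zero_iff, sqrt_ne_zero', hw]
  set K := Wₕ⁻¹ * A * Sₕ
  have hK : Wₕ * K = A * Sₕ := by
    simp only [K, Matrix.mul_assoc, mul_nonsing_inv_cancel_left Wₕ _ hu]
  have hR : (A * diagonal σ * Aᵀ + diagonal w).PosDef := by
    refine PosDef.posSemidef_add ?_ (posDef_diagonal_iff.mpr hw)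
    simpa using (PosSemidef.diagonal fun n => (hσ n).le).mul_mul_conjTranspose_same A
  have hmse := neg_trace_transpose_mul_inv_mul_le hR (A * diagonal σ) B
  rw [trace_transpose_mul_inv_mul_eq hSₕ hS hWₕ hW hK hu] at hmse
  have hkey := trace_inv_one_add_mul_le hlam hsorted K
  rw [sum_waterfillingGain_eq haM (haM.trans hMN) hact hinact,
    ← det_inv_mul_mul_mul_transpose_add hSₕ hS hWₕ hW hK hu] at hkey
  have hsplit := sum_filter_add_sum_filter_not univ (fun n : Fin N => (n : ℕ) < a) σ
  simp only [not_lt] at hsplit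
  simp only [ge_iff_le, trace_add, trace_sub, trace_smul, trace_diagonal, smul_eq_mul,
    Matrix.mul_assoc] at hmse hkey hMI ⊢
  linarith [mul_le_mul_of_nonneg_left hMI hlam.le, congrArg (lam * ·) hrate]

/-- Converse part of Theorem 1 (optimal SF channel for a Gaussian
source, linear encoder/decoder): under the water-filling conditions on λ★ and the
active-set size a, every encoder A with A Aᵀ = I, every diagonal noise covariance
Σ_ww with positive entries satisfying the mutual-information constraint, and every
decoder B incur MSE at least ∑_{n=a+1}^N σ_n² + a λ★/2.
(Indices are 0-based: source n of the paper corresponds to index n−1.) -/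
theorem stmt_14 {N M : ℕ} (hMN : M ≤ N)
    (σ : Fin N → ℝ) (hσ : ∀ n, 0 < σ n)
    (hsorted : ∀ i j : Fin N, i ≤ j → σ j ≤ σ i)
    (C : ℝ) (hC : 0 < C)
    (lam : ℝ) (hlam : 0 < lam)
    (a : ℕ) (ha1 : 1 ≤ a) (haM : a ≤ M)
    (hact : ∀ k : Fin N, (k : ℕ) < a → lam < 2 * σ k)
    (hinact : ∀ k : Fin N, a ≤ (k : ℕ) → (k : ℕ) < M → 2 * σ k ≤ lam)
    (hrate : (1 / 2 : ℝ) *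
        ∑ k ∈ Finset.univ.filter (fun k : Fin N => (k : ℕ) < a),
          Real.log (2 * σ k / lam) = C) :
    ∀ A : Matrix (Fin M) (Fin N) ℝ, A * Aᵀ = 1 →
    ∀ w : Fin M → ℝ, (∀ i, 0 < w i) →
    ∀ B : Matrix (Fin N) (Fin M) ℝ,
      (1 / 2 : ℝ) * Real.log
          (((Matrix.diagonal w)⁻¹ *
            (A * Matrix.diagonal σ * Aᵀ + Matrix.diagonal w)).det) ≤ C →
      Matrix.trace (Matrix.diagonal σ - (2 : ℝ) • (B * A * Matrix.diagonal σ)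
          + B * (A * Matrix.diagonal σ * Aᵀ + Matrix.diagonal w) * Bᵀ) ≥
        (∑ n ∈ Finset.univ.filter (fun n : Fin N => a ≤ (n : ℕ)), σ n)
          + (a : ℝ) * lam / 2 :=
  stmt_14_general hMN σ hσ hsorted C lam hlam a haM hact hinact hrate
end

section
/- Let Σ_xx = diag(σ_1², …, σ_N²) with σ_1² ≥ ⋯ ≥ σ_N² > 0, let M ≤ N, and C > 0. Suppose λ★ satisfies 0 < λ★ < 2σ_M² and (1/2) ∑_{k=1}^{M} ln(2σ_k²/λ★) = C. Define A★ = [I_M, 0_{M×(N−M)}], Σ_ww★ = diag((σ_{w,1}²)★, …, (σ_{w,M}²)★) with (σ_{w,k}²)★ = λ★σ_k²/(2σ_k² − λ★), and B★ = Σ_xx A★ᵀ (A★ Σ_xx A★ᵀ + Σ_ww★)⁻¹. Then: (i) A★ A★ᵀ = I_M; (ii) the mutual-information constraint is met with equality, i.e., (1/2) ln det((Σ_ww★)⁻¹ (A★ Σ_xx A★ᵀ + Σ_ww★)) = C; and (iii) the achieved mean-squared error equals the optimal value: Tr(Σ_xx − 2 B★ A★ Σ_xx + B★ (A★ Σ_xx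 A★ᵀ + Σ_ww★) B★ᵀ) = ∑_{n=M+1}^{N} σ_n² + M·λ★/2. -/
/-!
Here `σ n` stands for the variance `σ_n²`. The encoder `A★ = [I_M, 0]` keeps the `M` strongest
source components, so every matrix of the channel becomes diagonal: `A★ Σ A★ᵀ = diag(σ_k)` and
`K = A★ Σ A★ᵀ + Σ_ww★ = diag(σ_k + w_k)`.
For the LMMSE decoder `B★ = Σ A★ᵀ K⁻¹` one has `B★ K B★ᵀ = B★ A★ Σ`, so the error collapses to
`Tr Σ - Tr (K⁻¹ A★ Σ² A★ᵀ) = ∑ σ_n - ∑_k σ_k² / (σ_k + w_k)`. The reverse water-filling noise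
`w_k = λ σ_k / (2σ_k - λ)` is exactly the one with `σ_k + w_k = 2σ_k² / (2σ_k - λ)`, giving the
per-component rate `(σ_k + w_k) / w_k = 2σ_k / λ` and distortion `σ_k - σ_k² / (σ_k + w_k) = λ/2`.
-/

open Matrix

section Selection

variable {l n α : Type*} [Fintype n] [DecidableEq n] [NonAssocSemiring α]

theorem one_submatrix_mul_mul_transpose (f : l → n) (X : Matrix n n α) :
    (1 : Matrix n n α).submatrix f id * X * ((1 : Matrix n n α).submatrix f id)ᵀ =
      X.submatrix f f := by
  have hrows := one_submatrix_mul f (Equiv.refl n) X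
  have hcols := mul_submatrix_one (Equiv.refl n) f (X.submatrix f id)
  simp only [Equiv.coe_refl, Equiv.refl_symm, Function.id_comp] at hrows hcols
  rw [transpose_submatrix, transpose_one, hrows, hcols, submatrix_submatrix]
  rfl

theorem of_val_eq_eq_one_submatrix_castLE {M N : ℕ} (h : M ≤ N) :
    (of fun (i : Fin M) (j : Fin N) => if (j : ℕ) = (i : ℕ) then (1 : α) else 0) =
      (1 : Matrix (Fin N) (Fin N) α).submatrix (Fin.castLE h) id := by
  ext i j
  simp [one_apply, Fin.ext_iff, eq_comm]

end Selection

section LMMSE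

variable {m n α : Type*} [Fintype m] [Fintype n] [DecidableEq m] [CommRing α]

theorem lmmse_mul_mul_transpose {S : Matrix n n α} {A : Matrix m n α} {K : Matrix m m α}
    (hS : S.IsSymm) (hK : K.IsSymm) (hKdet : IsUnit K.det) :
    S * Aᵀ * K⁻¹ * K * (S * Aᵀ * K⁻¹)ᵀ = S * Aᵀ * K⁻¹ * A * S := by
  rw [Matrix.mul_assoc (S * Aᵀ), nonsing_inv_mul _ hKdet, Matrix.mul_one, transpose_mul,
    transpose_mul, transpose_nonsing_inv, hK.eq, hS.eq, transpose_transpose]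
  simp only [Matrix.mul_assoc]

theorem trace_mse_lmmse {S : Matrix n n α} {A : Matrix m n α} {K : Matrix m m α}
    (hS : S.IsSymm) (hK : K.IsSymm) (hKdet : IsUnit K.det) :
    trace (S - (2 : α) • (S * Aᵀ * K⁻¹ * A * S) + S * Aᵀ * K⁻¹ * K * (S * Aᵀ * K⁻¹)ᵀ) =
      trace S - trace (K⁻¹ * (A * (S * S) * Aᵀ)) := by
  rw [lmmse_mul_mul_transpose hS hK hKdet, trace_add, trace_sub, trace_smul,
    show S * Aᵀ * K⁻¹ * A * S = S * (Aᵀ * (K⁻¹ * (A * S))) by simp only [Matrix.mul_assoc],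
    trace_mul_comm S, show Aᵀ * (K⁻¹ * (A * S)) * S = Aᵀ * (K⁻¹ * (A * (S * S))) by
      simp only [Matrix.mul_assoc],
    trace_mul_comm Aᵀ, show K⁻¹ * (A * (S * S)) * Aᵀ = K⁻¹ * (A * (S * S) * Aᵀ) by
      simp only [Matrix.mul_assoc], smul_eq_mul]
  ring

end LMMSE

theorem inv_diagonal_of_ne_zero {n 𝕜 : Type*} [Fintype n] [DecidableEq n] [Field 𝕜] {d : n → 𝕜}
    (hd : ∀ i, d i ≠ 0) : (diagonal d)⁻¹ = diagonal d⁻¹ := by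
  refine inv_eq_right_inv ?_
  rw [diagonal_mul_diagonal, ← diagonal_one]
  exact congrArg diagonal (funext fun i => mul_inv_cancel₀ (hd i))

theorem Fin.sum_univ_eq_sum_castLE_add_sum_filter {M N : ℕ} {β : Type*} [AddCommMonoid β]
    (h : M ≤ N) (f : Fin N → β) :
    ∑ n, f n = ∑ k : Fin M, f (Fin.castLE h k) +
      ∑ n ∈ Finset.univ.filter (fun n : Fin N => M ≤ (n : ℕ)), f n := by
  rw [← Finset.sum_filter_not_add_sum_filter _ (fun n : Fin N => M ≤ (n : ℕ))]
  congr 1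
  refine Eq.trans ?_ (Finset.sum_map Finset.univ (Fin.castLEEmb h) f)
  congr 1
  ext n
  simp only [Finset.mem_filter, Finset.mem_univ, true_and, not_le, Finset.mem_map,
    Fin.coe_castLEEmb]
  exact ⟨fun hn => ⟨⟨n, hn⟩, rfl⟩, by rintro ⟨k, rfl⟩; exact k.isLt⟩

/-- The reverse water-filling noise variances `(σ_{w,k}²)★` at water level `lam / 2`. -/
noncomputable def optNoiseVar {ι : Type*} (lam : ℝ) (s : ι → ℝ) : ι → ℝ :=
  fun k => lam * s k / (2 * s k - lam)

section OptNoiseVar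

variable {ι : Type*} {lam : ℝ} {s : ι → ℝ}

theorem add_optNoiseVar (k : ι) (hk : 2 * s k - lam ≠ 0) :
    s k + optNoiseVar lam s k = 2 * s k * s k / (2 * s k - lam) := by
  rw [optNoiseVar, eq_div_iff hk, add_mul, div_mul_cancel₀ _ hk]
  ring

theorem add_optNoiseVar_pos (hlam : 0 < lam) (hs : ∀ k, lam < 2 * s k) (k : ι) :
    0 < s k + optNoiseVar lam s k := by
  have hsk := hs k
  rw [add_optNoiseVar k (by linarith)]
  exact div_pos (by nlinarith) (by linarith)

theorem inv_optNoiseVar_mul_add (hlam : 0 < lam) (hs : ∀ k, lam < 2 * s k) (k : ι) :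
    (optNoiseVar lam s k)⁻¹ * (s k + optNoiseVar lam s k) = 2 * s k / lam := by
  have hsk := hs k
  have hk : 2 * s k - lam ≠ 0 := by linarith
  rw [add_optNoiseVar k hk, optNoiseVar, inv_div, div_mul_div_comm,
    div_eq_div_iff (mul_pos (mul_pos hlam (by linarith)) (by linarith)).ne' hlam.ne']
  ring

theorem inv_add_optNoiseVar_mul_self (hlam : 0 < lam) (hs : ∀ k, lam < 2 * s k) (k : ι) :
    (s k + optNoiseVar lam s k)⁻¹ * (s k * s k) = s k - lam / 2 := by
  have hsk := hs k
  have : s k ≠ 0 := by linarith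
  rw [add_optNoiseVar k (by linarith)]
  field_simp

variable [Fintype ι] [DecidableEq ι]

theorem det_inv_diagonal_optNoiseVar_mul (hlam : 0 < lam) (hs : ∀ k, lam < 2 * s k) :
    ((diagonal (optNoiseVar lam s))⁻¹ * diagonal (s + optNoiseVar lam s)).det =
      ∏ k, 2 * s k / lam := by
  rw [det_mul, det_nonsing_inv, Ring.inverse_eq_inv', det_diagonal, det_diagonal,
    ← Finset.prod_inv_distrib, ← Finset.prod_mul_distrib]
  exact Finset.prod_congr rfl fun k _ => inv_optNoiseVar_mul_add hlam hs k

theorem trace_inv_diagonal_add_optNoiseVar_mul (hlam : 0 < lam) (hs : ∀ k, lam < 2 * s k) :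
    ((diagonal (s + optNoiseVar lam s))⁻¹ * diagonal (fun k => s k * s k)).trace =
      ∑ k, s k - Fintype.card ι * (lam / 2) := by
  rw [inv_diagonal_of_ne_zero (d := s + optNoiseVar lam s) (add_optNoiseVar_pos hlam hs · |>.ne'),
    diagonal_mul_diagonal, trace_diagonal]
  simp only [Pi.inv_apply, Pi.add_apply, inv_add_optNoiseVar_mul_self hlam hs,
    Finset.sum_sub_distrib, Finset.sum_const, Finset.card_univ, nsmul_eq_mul]

end OptNoiseVar

theorem stmt_15_general {N M : ℕ} (hM : 0 < M) (hMN : M ≤ N)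
    (σ : Fin N → ℝ)
    (hsorted : ∀ i j : Fin N, i ≤ j → σ j ≤ σ i)
    (C : ℝ)
    (lam : ℝ) (hlam0 : 0 < lam)
    (hlamM : lam < 2 * σ ⟨M - 1, lt_of_lt_of_le (Nat.sub_lt hM one_pos) hMN⟩)
    (hrate : (1 / 2 : ℝ) *
        ∑ k : Fin M, Real.log (2 * σ (Fin.castLE hMN k) / lam) = C)
    (Astar : Matrix (Fin M) (Fin N) ℝ)
    (hAstar : Astar = Matrix.of fun (i : Fin M) (j : Fin N) =>
      if (j : ℕ) = (i : ℕ) then (1 : ℝ) else 0)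
    (Sww : Matrix (Fin M) (Fin M) ℝ)
    (hSww : Sww = Matrix.diagonal fun k : Fin M =>
      lam * σ (Fin.castLE hMN k) / (2 * σ (Fin.castLE hMN k) - lam))
    (Bstar : Matrix (Fin N) (Fin M) ℝ)
    (hBstar : Bstar =
      Matrix.diagonal σ * Astarᵀ * (Astar * Matrix.diagonal σ * Astarᵀ + Sww)⁻¹) :
    Astar * Astarᵀ = 1 ∧
    (1 / 2 : ℝ) * Real.log
        ((Sww⁻¹ * (Astar * Matrix.diagonal σ * Astarᵀ + Sww)).det) = C ∧
    Matrix.trace (Matrix.diagonal σ - (2 : ℝ) • (Bstar * Astar * Matrix.diagonal σ)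
        + Bstar * (Astar * Matrix.diagonal σ * Astarᵀ + Sww) * Bstarᵀ) =
      (∑ n ∈ Finset.univ.filter (fun n : Fin N => M ≤ (n : ℕ)), σ n)
        + (M : ℝ) * lam / 2 := by
  set f := Fin.castLE hMN
  have hf : Function.Injective f := Fin.castLE_injective hMN
  have hA : Astar = (1 : Matrix (Fin N) (Fin N) ℝ).submatrix f id :=
    hAstar.trans (of_val_eq_eq_one_submatrix_castLE hMN)
  have hlam (k : Fin M) : lam < 2 * (σ ∘ f) k :=
    hlamM.trans_le (by gcongr; exact hsorted _ _ (Fin.mk_le_mk.2 (Nat.le_sub_one_of_lt k.isLt)))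
  have hW : Sww = diagonal (optNoiseVar lam (σ ∘ f)) := hSww
  have hK : Astar * diagonal σ * Astarᵀ + Sww = diagonal (σ ∘ f + optNoiseVar lam (σ ∘ f)) := by
    rw [hA, one_submatrix_mul_mul_transpose, submatrix_diagonal _ _ hf, hW, diagonal_add]
    rfl
  refine ⟨?_, ?_, ?_⟩
  · rw [hA, ← submatrix_one f hf, ← one_submatrix_mul_mul_transpose f 1, Matrix.mul_one]
  · rw [hK, hW, det_inv_diagonal_optNoiseVar_mul hlam0 hlam,
      Real.log_prod fun k _ => (div_pos (by linarith [hlam k]) hlam0).ne']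
    exact hrate
  · have hKdet : IsUnit (diagonal (σ ∘ f + optNoiseVar lam (σ ∘ f))).det := by
      rw [det_diagonal]
      exact (Finset.prod_pos fun k _ => add_optNoiseVar_pos hlam0 hlam k).ne'.isUnit
    have hsq : Astar * (diagonal σ * diagonal σ) * Astarᵀ =
        diagonal fun k => (σ ∘ f) k * (σ ∘ f) k := by
      rw [hA, diagonal_mul_diagonal, one_submatrix_mul_mul_transpose, submatrix_diagonal _ _ hf]
      rfl
    rw [hBstar, hK, trace_mse_lmmse (isSymm_diagonal σ) (isSymm_diagonal _) hKdet, hsq,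
      trace_inv_diagonal_add_optNoiseVar_mul hlam0 hlam, trace_diagonal,
      Fin.sum_univ_eq_sum_castLE_add_sum_filter hMN, Fintype.card_fin]
    simp only [Function.comp_apply, f]
    ring

/-- Achievability part of Theorem 1 (all M selected sources active,
0 < λ★ < 2σ_M²): with A★ = [I_M, 0], Σ_ww★ = diag(λ★σ_k²/(2σ_k² − λ★)) and
B★ = Σ_xx A★ᵀ (A★ Σ_xx A★ᵀ + Σ_ww★)⁻¹, one has (i) A★ A★ᵀ = I_M, (ii) the
mutual-information constraint is met with equality, and (iii) the achieved MSE is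
∑_{n=M+1}^N σ_n² + M λ★/2. (Indices are 0-based.) -/
theorem stmt_15 {N M : ℕ} (hM : 0 < M) (hMN : M ≤ N)
    (σ : Fin N → ℝ) (hσ : ∀ n, 0 < σ n)
    (hsorted : ∀ i j : Fin N, i ≤ j → σ j ≤ σ i)
    (C : ℝ) (hC : 0 < C)
    (lam : ℝ) (hlam0 : 0 < lam)
    (hlamM : lam < 2 * σ ⟨M - 1, lt_of_lt_of_le (Nat.sub_lt hM one_pos) hMN⟩)
    (hrate : (1 / 2 : ℝ) *
        ∑ k : Fin M, Real.log (2 * σ (Fin.castLE hMN k) / lam) = C)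
    (Astar : Matrix (Fin M) (Fin N) ℝ)
    (hAstar : Astar = Matrix.of fun (i : Fin M) (j : Fin N) =>
      if (j : ℕ) = (i : ℕ) then (1 : ℝ) else 0)
    (Sww : Matrix (Fin M) (Fin M) ℝ)
    (hSww : Sww = Matrix.diagonal fun k : Fin M =>
      lam * σ (Fin.castLE hMN k) / (2 * σ (Fin.castLE hMN k) - lam))
    (Bstar : Matrix (Fin N) (Fin M) ℝ)
    (hBstar : Bstar =
      Matrix.diagonal σ * Astarᵀ * (Astar * Matrix.diagonal σ * Astarᵀ + Sww)⁻¹) :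
    Astar * Astarᵀ = 1 ∧
    (1 / 2 : ℝ) * Real.log
        ((Sww⁻¹ * (Astar * Matrix.diagonal σ * Astarᵀ + Sww)).det) = C ∧
    Matrix.trace (Matrix.diagonal σ - (2 : ℝ) • (Bstar * Astar * Matrix.diagonal σ)
        + Bstar * (Astar * Matrix.diagonal σ * Astarᵀ + Sww) * Bstarᵀ) =
      (∑ n ∈ Finset.univ.filter (fun n : Fin N => M ≤ (n : ℕ)), σ n)
        + (M : ℝ) * lam / 2 :=
  stmt_15_general hM hMN σ hsorted C lam hlam0 hlamM hrate Astar hAstar Sww hSww Bstar hBstar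
end

section
/- Let B be a positive integer, let C be a real number with 0 < C < B, and let v_1, …, v_B be real numbers, not all zero. Define α = max((C·max_i |v_i|² − ∑_{i=1}^B |v_i|²)/(B − C), 0) and ρ_n = (|v_n|² + α) / ∑_{i=1}^B (|v_i|² + α) for n = 1, …, B. Then ∑_{n=1}^B ρ_n = 1 and 0 ≤ ρ_n ≤ 1/C for every n. -/
open BigOperators

/-- Feasibility of the rate-allocation parameterization
ρ_n = (|v_n|² + α)/∑ᵢ(|v_i|² + α) with
α = max((C maxᵢ|v_i|² − ∑ᵢ|v_i|²)/(B − C), 0): the ρ_n sum to 1 and satisfy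
0 ≤ ρ_n ≤ 1/C. -/
theorem stmt_16 {B : ℕ} (hB : 0 < B) (C : ℝ) (hC0 : 0 < C) (hCB : C < (B : ℝ))
    (v : Fin B → ℝ) (hv : ∃ i, v i ≠ 0)
    (α : ℝ)
    (hα : α = max
      ((C * (Finset.univ.sup' ⟨⟨0, hB⟩, Finset.mem_univ _⟩ fun i => v i ^ 2)
          - ∑ i, v i ^ 2) / ((B : ℝ) - C)) 0)
    (ρ : Fin B → ℝ)
    (hρ : ∀ n, ρ n = (v n ^ 2 + α) / ∑ i, (v i ^ 2 + α)) :
    (∑ n, ρ n = 1) ∧ ∀ n, 0 ≤ ρ n ∧ ρ n ≤ 1 / C := by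
  set M : ℝ := Finset.univ.sup' ⟨⟨0, hB⟩, Finset.mem_univ _⟩ (fun i => v i ^ 2) with hM
  have hMle : ∀ n : Fin B, v n ^ 2 ≤ M := fun n =>
    Finset.le_sup' (fun i => v i ^ 2) (Finset.mem_univ n)
  have hα0 : 0 ≤ α := by rw [hα]; exact le_max_right _ _
  have hBC : 0 < (B : ℝ) - C := sub_pos.mpr hCB
  have hαkey : C * M - (∑ i, v i ^ 2) ≤ α * ((B : ℝ) - C) := by
    have h1 : (C * M - ∑ i, v i ^ 2) / ((B : ℝ) - C) ≤ α := by
      rw [hα]; exact le_max_left _ _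
    calc C * M - (∑ i, v i ^ 2)
        = (C * M - ∑ i, v i ^ 2) / ((B : ℝ) - C) * ((B : ℝ) - C) := by
          field_simp
      _ ≤ α * ((B : ℝ) - C) := by
          exact mul_le_mul_of_nonneg_right h1 hBC.le
  have hS : 0 < ∑ i, v i ^ 2 := by
    obtain ⟨i, hi⟩ := hv
    refine Finset.sum_pos' (fun j _ => sq_nonneg _) ⟨i, Finset.mem_univ i, ?_⟩
    positivity
  have hD : (∑ i, (v i ^ 2 + α)) = (∑ i, v i ^ 2) + B * α := by
    rw [Finset.sum_add_distrib, Finset.sum_const, Finset.card_univ, Fintype.card_fin,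
      nsmul_eq_mul]
  have hDpos : 0 < ∑ i, (v i ^ 2 + α) := by
    rw [hD]; positivity
  constructor
  · rw [Finset.sum_congr rfl (fun n _ => hρ n), ← Finset.sum_div, div_self hDpos.ne']
  · intro n
    constructor
    · rw [hρ n]
      apply div_nonneg _ hDpos.le
      positivity
    · rw [hρ n, div_le_div_iff₀ hDpos hC0, one_mul]
      have h1 : C * (v n ^ 2 + α) ≤ C * (M + α) := by
        have := hMle n
        nlinarith
      have h2 : C * (M + α) ≤ ∑ i, (v i ^ 2 + α) := by
        rw [hD]
        nlinarith
      calc (v n ^ 2 + α) * C = C * (v n ^ 2 + α) := by ring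
        _ ≤ _ := h1.trans h2
end
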